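/- arXiv:0905.3281 — 2 statements merged into one kernel-verified Lean document; each statement's English description precedes it below -/
import Mathlib

section
/- Let H be a finite k-regular simple graph such that for every two distinct vertices u, v of H one has N[u] ≠ N[v]. If G is a finite simple graph with the same domination polynomial as H (i.e., d(G,i) = d(H,i) for all i ≥ 1), then G is also a k-regular graph. -/
/-- `S` is a dominating set of `G`: every vertex not in `S` is adjacent to some vertex of `S`. -/
def IsDomSet {V : Type*} (G : SimpleGraph V) (S : Finset V) : Prop :=
  ∀ v : V, v ∉ S → ∃ u ∈ S, G.Adj u v

/-- `d(G,i)`: the number of dominating sets of `G` of cardinality `i`. -/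
noncomputable def domCount {V : Type*} (G : SimpleGraph V) (i : ℕ) : ℕ :=
  {S : Finset V | IsDomSet G S ∧ S.card = i}.ncard

/-- `d_v(G,i)`: the number of dominating sets of `G` of cardinality `i` containing `v`. -/
noncomputable def domCountVert {V : Type*} (G : SimpleGraph V) (v : V) (i : ℕ) : ℕ :=
  {S : Finset V | IsDomSet G S ∧ S.card = i ∧ v ∈ S}.ncard

/-!
Complementation turns the non-dominating `i`-sets of an `n`-vertex graph into the `(n - i)`-sets
containing some closed neighbourhood `N[v]`, so the domination polynomial determines, for every
`j`, the number `c(j)` of `j`-sets containing some `N[v]`. The least `j` with `c(j) > 0` is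
`δ + 1`, and `c(δ + 1)` is at most the number of vertices of minimum degree `δ`, with equality
when `v ↦ N[v]` is injective. For `H` this gives `c(k + 1) = n`; hence `G` has minimum degree
`k` and all of its `n` vertices have degree `k`.
-/

open Finset

namespace SimpleGraph

variable {V : Type*} [Fintype V] [DecidableEq V] (G : SimpleGraph V) [DecidableRel G.Adj]

def closedNbhd (v : V) : Finset V :=
  insert v (G.neighborFinset v)

lemma card_closedNbhd (v : V) : #(G.closedNbhd v) = G.degree v + 1 := by
  rw [closedNbhd, card_insert_of_notMem (by simp), card_neighborFinset_eq_degree]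

lemma mem_closedNbhd {v u : V} : u ∈ G.closedNbhd v ↔ u = v ∨ G.Adj u v := by
  rw [closedNbhd, mem_insert, mem_neighborFinset, G.adj_comm]

end SimpleGraph

open SimpleGraph

section Counting

variable {V : Type*} [Fintype V] (G : SimpleGraph V)

instance [DecidableEq V] [DecidableRel G.Adj] : DecidablePred (IsDomSet G) :=
  fun S => inferInstanceAs (Decidable (∀ v, v ∉ S → ∃ u ∈ S, G.Adj u v))

lemma domCount_eq_card [DecidableEq V] [DecidableRel G.Adj] (i : ℕ) :
    domCount G i = #{S : Finset V | IsDomSet G S ∧ #S = i} := by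
  rw [domCount, ← Set.ncard_coe_finset, coe_filter]
  simp only [mem_univ, true_and]

lemma domCount_eq_zero_of_card_lt {i : ℕ} (hi : Fintype.card V < i) : domCount G i = 0 := by
  classical
  rw [domCount_eq_card, card_eq_zero, filter_eq_empty_iff]
  exact fun S _ ⟨_, hS⟩ => hi.not_ge (hS ▸ card_le_univ S)

lemma domCount_card : domCount G (Fintype.card V) = 1 := by
  classical
  rw [domCount_eq_card, card_eq_one]
  refine ⟨univ, eq_singleton_iff_unique_mem.2 ⟨?_, fun S hS => ?_⟩⟩
  · exact mem_filter.2 ⟨mem_univ _, fun v hv => (hv (mem_univ v)).elim, card_univ⟩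
  · exact eq_univ_of_card S (mem_filter.1 hS).2.2

variable [DecidableEq V] [DecidableRel G.Adj]

lemma not_isDomSet_iff {S : Finset V} : ¬ IsDomSet G S ↔ ∃ v, G.closedNbhd v ⊆ Sᶜ := by
  simp only [IsDomSet, not_forall, not_exists, not_and, subset_iff, mem_closedNbhd, mem_compl]
  refine exists_congr fun v => ⟨fun ⟨hv, hS⟩ u => ?_, fun h => ⟨h (.inl rfl), fun u hu hadj => ?_⟩⟩
  · rintro (rfl | hadj)
    exacts [hv, fun hu => hS u hu hadj]
  · exact h (.inr hadj) hu

def nbhdSupersetCount (j : ℕ) : ℕ :=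
  #{T : Finset V | #T = j ∧ ∃ v, G.closedNbhd v ⊆ T}

lemma domCount_add_nbhdSupersetCount {i : ℕ} (hi : i ≤ Fintype.card V) :
    domCount G i + nbhdSupersetCount G (Fintype.card V - i) = (Fintype.card V).choose i := by
  have hcompl : nbhdSupersetCount G (Fintype.card V - i) =
      #{S ∈ powersetCard i univ | ¬ IsDomSet G S} := by
    refine card_nbij' compl compl (fun T hT => ?_) (fun S hS => ?_) (fun T _ => compl_compl T)
      (fun S _ => compl_compl S)
    · simp only [coe_filter, mem_univ, true_and, Set.mem_ofPred_eq, mem_powersetCard,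
        subset_univ, not_isDomSet_iff, compl_compl] at hT ⊢
      exact ⟨by rw [card_compl, hT.1]; omega, hT.2⟩
    · simp only [coe_filter, mem_univ, true_and, Set.mem_ofPred_eq, mem_powersetCard,
        subset_univ, not_isDomSet_iff] at hS ⊢
      exact ⟨by rw [card_compl, hS.1], hS.2⟩
  have hdom : domCount G i = #{S ∈ powersetCard i univ | IsDomSet G S} := by
    rw [domCount_eq_card]
    congr 1
    ext S
    simp [and_comm]
  rw [hdom, hcompl, card_filter_add_card_filter_not, card_powersetCard, card_univ]

lemma nbhdSupersetCount_eq_zero_of_card_lt {j : ℕ} (hj : Fintype.card V < j) :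
    nbhdSupersetCount G j = 0 := by
  rw [nbhdSupersetCount, card_eq_zero, filter_eq_empty_iff]
  exact fun T _ ⟨hT, _⟩ => hj.not_ge (hT ▸ card_le_univ T)

lemma nbhdSupersetCount_card :
    nbhdSupersetCount G (Fintype.card V) = if Fintype.card V = 0 then 0 else 1 := by
  split_ifs with hV
  · rw [Fintype.card_eq_zero_iff] at hV
    rw [nbhdSupersetCount, card_eq_zero, filter_eq_empty_iff]
    exact fun T _ ⟨_, v, _⟩ => hV.elim v
  · obtain ⟨v⟩ := Fintype.card_pos_iff.1 (Nat.pos_of_ne_zero hV)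
    rw [nbhdSupersetCount, card_eq_one]
    refine ⟨univ, eq_singleton_iff_unique_mem.2 ⟨?_, fun T hT => ?_⟩⟩
    · exact mem_filter.2 ⟨mem_univ _, card_univ, v, subset_univ _⟩
    · exact eq_univ_of_card T (mem_filter.1 hT).2.1

lemma nbhdSupersetCount_degree_add_one_pos (v : V) :
    0 < nbhdSupersetCount G (G.degree v + 1) :=
  card_pos.2 ⟨G.closedNbhd v, mem_filter.2 ⟨mem_univ _, G.card_closedNbhd v, v, subset_rfl⟩⟩

lemma exists_degree_lt_of_nbhdSupersetCount_pos {j : ℕ} (hj : 0 < nbhdSupersetCount G j) :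
    ∃ v, G.degree v < j := by
  obtain ⟨T, hT⟩ := card_pos.1 hj
  obtain ⟨-, hT, v, hv⟩ := mem_filter.1 hT
  exact ⟨v, by simpa [G.card_closedNbhd, hT] using card_le_card hv⟩

lemma card_degree_eq_le_nbhdSupersetCount (hinj : Function.Injective G.closedNbhd) (d : ℕ) :
    #{v | G.degree v = d} ≤ nbhdSupersetCount G (d + 1) := by
  refine card_le_card_of_injOn G.closedNbhd (fun v hv => ?_) hinj.injOn
  rw [coe_filter, Set.mem_ofPred_eq] at hv ⊢
  exact ⟨mem_univ _, by rw [card_closedNbhd, hv.2], v, subset_rfl⟩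

/-- A `(d + 1)`-set containing some `N[v]` equals it, so it is the closed neighbourhood of a
vertex of degree `d`. -/
lemma nbhdSupersetCount_le_card_degree_eq {d : ℕ} (hmin : ∀ v, d ≤ G.degree v) :
    nbhdSupersetCount G (d + 1) ≤ #{v | G.degree v = d} := by
  refine card_le_card_of_surjOn G.closedNbhd fun T hT => ?_
  obtain ⟨-, hT, v, hv⟩ := mem_filter.1 hT
  have hvT : G.closedNbhd v = T :=
    eq_of_subset_of_card_le hv (by rw [hT, card_closedNbhd]; exact Nat.succ_le_succ (hmin v))
  refine ⟨v, ?_, hvT⟩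
  have hdeg := card_closedNbhd G v
  rw [hvT, hT] at hdeg
  simpa using hdeg.symm

end Counting

section SameDominationPolynomial

variable {V W : Type*} [Fintype V] [Fintype W] (G : SimpleGraph V) (H : SimpleGraph W)

lemma card_le_card_of_domCount_eq (hdom : ∀ i, 1 ≤ i → domCount G i = domCount H i) :
    Fintype.card V ≤ Fintype.card W := by
  rcases Nat.eq_zero_or_pos (Fintype.card V) with hV | hV
  · omega
  by_contra! hlt
  have := hdom _ hV
  rw [domCount_card, domCount_eq_zero_of_card_lt H hlt] at this
  exact one_ne_zero this

lemma card_eq_card_of_domCount_eq (hdom : ∀ i, 1 ≤ i → domCount G i = domCount H i) :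
    Fintype.card V = Fintype.card W :=
  (card_le_card_of_domCount_eq G H hdom).antisymm
    (card_le_card_of_domCount_eq H G fun i hi => (hdom i hi).symm)

variable [DecidableEq V] [DecidableEq W] [DecidableRel G.Adj] [DecidableRel H.Adj]

lemma nbhdSupersetCount_eq_of_domCount_eq (hdom : ∀ i, 1 ≤ i → domCount G i = domCount H i)
    (j : ℕ) : nbhdSupersetCount G j = nbhdSupersetCount H j := by
  have hcard := card_eq_card_of_domCount_eq G H hdom
  rcases lt_trichotomy j (Fintype.card V) with hj | rfl | hj
  · have hG := domCount_add_nbhdSupersetCount G (i := Fintype.card V - j) (by omega)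
    have hH := domCount_add_nbhdSupersetCount H (i := Fintype.card V - j) (by omega)
    rw [Nat.sub_sub_self hj.le] at hG
    rw [← hcard, Nat.sub_sub_self hj.le] at hH
    have := hdom (Fintype.card V - j) (by omega)
    omega
  · rw [nbhdSupersetCount_card, hcard, nbhdSupersetCount_card]
  · rw [nbhdSupersetCount_eq_zero_of_card_lt G hj,
      nbhdSupersetCount_eq_zero_of_card_lt H (hcard ▸ hj :)]

end SameDominationPolynomial

theorem regular_of_domCount_eq {V W : Type*} [Fintype V] [Fintype W] [DecidableEq W]
    (G : SimpleGraph V) [DecidableRel G.Adj] (H : SimpleGraph W) [DecidableRel H.Adj] (k : ℕ)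
    (hreg : H.IsRegularOfDegree k)
    (hnbr : ∀ u v : W, u ≠ v →
      insert u (H.neighborFinset u) ≠ insert v (H.neighborFinset v))
    (hdom : ∀ i : ℕ, 1 ≤ i → domCount G i = domCount H i) :
    G.IsRegularOfDegree k := by
  classical
  have hinj : Function.Injective H.closedNbhd := fun u v huv => by_contra fun h => hnbr u v h huv
  have hcount := nbhdSupersetCount_eq_of_domCount_eq G H hdom
  have hmin : ∀ v, k ≤ G.degree v := fun v => by
    obtain ⟨w, hw⟩ := exists_degree_lt_of_nbhdSupersetCount_pos H
      (hcount _ ▸ nbhdSupersetCount_degree_add_one_pos G v)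
    rw [hreg w] at hw
    omega
  have hall : #{v | G.degree v = k} = #(univ : Finset V) := by
    refine (card_filter_le _ _).antisymm ?_
    calc #(univ : Finset V) = Fintype.card W := by
          rw [card_univ, card_eq_card_of_domCount_eq G H hdom]
      _ = #{w | H.degree w = k} := by rw [filter_true_of_mem fun w _ => hreg w, card_univ]
      _ ≤ nbhdSupersetCount H (k + 1) := card_degree_eq_le_nbhdSupersetCount H hinj k
      _ = nbhdSupersetCount G (k + 1) := (hcount _).symm
      _ ≤ #{v | G.degree v = k} := nbhdSupersetCount_le_card_degree_eq G hmin
  exact fun v => card_filter_eq_iff.1 hall v (mem_univ v)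
end

section
/- Every connected 3-regular (cubic) simple graph of order 10 has domination number 3, i.e., γ(G) = 3. -/
/-- The domination number of a graph: the minimum cardinality of a dominating set. -/
noncomputable def domNumber {V : Type*} (G : SimpleGraph V) : ℕ :=
  sInf {i : ℕ | ∃ S : Finset V, IsDomSet G S ∧ S.card = i}

/-!
A closed neighbourhood `N[v]` of a cubic graph has four vertices, so ten vertices need three of
them. Conversely, if two closed neighbourhoods `N[u]`, `N[v]` are disjoint they miss exactly two
vertices `x`, `y`. Either one vertex dominates both, or `N[x]`, `N[y]` are disjoint as well; then
`N(u) ∪ N(v) = N(x) ∪ N(y)` induces a perfect matching, and picking `s ∈ N(u) ∩ N(x)`,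
`t ∈ N(v) ∩ N(y)` non-adjacent (or the same with `x`, `y` swapped) and one endpoint of the third
matching edge gives a dominating triple. If no two closed neighbourhoods are disjoint, every
vertex outside `N[u]` has exactly one neighbour in `N(u)`, by double counting, so the six vertices
outside `N[u]` induce a 2-regular graph, and two of its vertices dominate it.
-/

open Finset

lemma Finset.card_eq_card_inter_add_card_inter {α : Type*} [DecidableEq α] {s t u : Finset α}
    (hs : s ⊆ t ∪ u) (htu : Disjoint t u) : #s = #(s ∩ t) + #(s ∩ u) := by
  rw [← card_union_of_disjoint (htu.mono inter_subset_right inter_subset_right),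
    ← inter_union_distrib_left, inter_eq_left.2 hs]

namespace SimpleGraph

variable {V : Type*} {G : SimpleGraph V} [Fintype V] [DecidableEq V] [DecidableRel G.Adj]

variable (G) in
def closedNeighborFinset (v : V) : Finset V := insert v (G.neighborFinset v)

@[simp]
lemma mem_closedNeighborFinset {v w : V} :
    w ∈ G.closedNeighborFinset v ↔ w = v ∨ G.Adj v w := by
  simp [closedNeighborFinset]

lemma self_mem_closedNeighborFinset (v : V) : v ∈ G.closedNeighborFinset v :=
  mem_insert_self _ _

lemma mem_closedNeighborFinset_comm {v w : V} :
    w ∈ G.closedNeighborFinset v ↔ v ∈ G.closedNeighborFinset w := by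
  simp [eq_comm, G.adj_comm]

lemma neighborFinset_subset_closedNeighborFinset (v : V) :
    G.neighborFinset v ⊆ G.closedNeighborFinset v :=
  subset_insert _ _

lemma disjoint_neighborFinset_of_disjoint_closedNeighborFinset {u v : V}
    (huv : Disjoint (G.closedNeighborFinset u) (G.closedNeighborFinset v)) :
    Disjoint (G.neighborFinset u) (G.neighborFinset v) :=
  huv.mono (neighborFinset_subset_closedNeighborFinset u)
    (neighborFinset_subset_closedNeighborFinset v)

lemma card_closedNeighborFinset_inter_of_mem {v : V} {s : Finset V} (hv : v ∈ s) :
    #(G.closedNeighborFinset v ∩ s) = #(G.neighborFinset v ∩ s) + 1 := by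
  rw [closedNeighborFinset, insert_inter_of_mem hv, card_insert_of_notMem (by simp)]

lemma IsRegularOfDegree.card_closedNeighborFinset {d : ℕ} (h : G.IsRegularOfDegree d) (v : V) :
    #(G.closedNeighborFinset v) = d + 1 := by
  rw [closedNeighborFinset, card_insert_of_notMem (by simp), card_neighborFinset_eq_degree, h v]

lemma sum_card_neighborFinset_inter_comm (s t : Finset V) :
    ∑ a ∈ s, #(G.neighborFinset a ∩ t) = ∑ b ∈ t, #(G.neighborFinset b ∩ s) := by
  have h : ∀ a (r : Finset V), G.neighborFinset a ∩ r = r.bipartiteAbove G.Adj a := by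
    intro a r; ext; simp [bipartiteAbove, and_comm]
  simp_rw [h]
  rw [sum_card_bipartiteAbove_eq_sum_card_bipartiteBelow]
  congr! 2 with b
  ext; simp [bipartiteBelow, bipartiteAbove, G.adj_comm]

end SimpleGraph

open SimpleGraph

section Domination

variable {V : Type*} {G : SimpleGraph V}

lemma domNumber_eq_of_exists_of_forall {k : ℕ} (hex : ∃ S, IsDomSet G S ∧ #S ≤ k)
    (hle : ∀ S, IsDomSet G S → k ≤ #S) : domNumber G = k := by
  obtain ⟨S, hS, hSk⟩ := hex
  have hmem : #S ∈ {i : ℕ | ∃ S : Finset V, IsDomSet G S ∧ #S = i} := ⟨S, hS, rfl⟩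
  refine le_antisymm ((Nat.sInf_le hmem).trans hSk) (le_csInf ⟨#S, hmem⟩ ?_)
  rintro _ ⟨T, hT, rfl⟩
  exact hle T hT

variable [Fintype V] [DecidableEq V] [DecidableRel G.Adj]

lemma isDomSet_iff {S : Finset V} :
    IsDomSet G S ↔ ∀ w, ∃ s ∈ S, w ∈ G.closedNeighborFinset s := by
  refine ⟨fun h w => ?_, fun h w hw => ?_⟩
  · by_cases hw : w ∈ S
    · exact ⟨w, hw, self_mem_closedNeighborFinset w⟩
    · obtain ⟨s, hs, hsw⟩ := h w hw
      exact ⟨s, hs, mem_closedNeighborFinset.2 (Or.inr hsw)⟩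
  · obtain ⟨s, hs, hsw⟩ := h w
    rcases mem_closedNeighborFinset.1 hsw with rfl | hsw
    · exact absurd hs hw
    · exact ⟨s, hs, hsw⟩

lemma isDomSet_triple {a b c : V}
    (h : ∀ w, w ∈ G.closedNeighborFinset a ∨ w ∈ G.closedNeighborFinset b ∨
      w ∈ G.closedNeighborFinset c) : IsDomSet G {a, b, c} :=
  isDomSet_iff.2 fun w => by
    rcases h w with hw | hw | hw
    exacts [⟨a, by simp, hw⟩, ⟨b, by simp, hw⟩, ⟨c, by simp, hw⟩]

lemma IsDomSet.card_le_mul {d : ℕ} (hreg : G.IsRegularOfDegree d) {S : Finset V}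
    (hS : IsDomSet G S) : Fintype.card V ≤ (d + 1) * #S :=
  calc Fintype.card V = #(S.biUnion G.closedNeighborFinset) := by
        rw [← card_univ, eq_univ_of_forall (s := S.biUnion _) fun w => by
          simpa using isDomSet_iff.1 hS w]
    _ ≤ ∑ s ∈ S, #(G.closedNeighborFinset s) := card_biUnion_le
    _ = (d + 1) * #S := by
        rw [sum_const_nat fun s _ => hreg.card_closedNeighborFinset s, mul_comm]

end Domination

section CubicOrderTen

variable {V : Type*} {G : SimpleGraph V} [Fintype V] [DecidableEq V] [DecidableRel G.Adj]

lemma exists_subset_union_closedNeighborFinset_of_card_inter_eq_two {O : Finset V} (hO : #O = 6)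
    (hO2 : ∀ o ∈ O, #(G.neighborFinset o ∩ O) = 2) :
    ∃ x r, O ⊆ G.closedNeighborFinset x ∪ G.closedNeighborFinset r := by
  obtain ⟨x, hx⟩ : O.Nonempty := card_pos.1 (by omega)
  have hR : #(O \ G.closedNeighborFinset x) = 3 := by
    have := card_sdiff_add_card_inter O (G.closedNeighborFinset x)
    rw [inter_comm, card_closedNeighborFinset_inter_of_mem hx, hO2 x hx, hO] at this
    omega
  set P := G.neighborFinset x ∩ O
  set R := O \ G.closedNeighborFinset x
  -- `x` is one of the two neighbours of `p` in `O`
  have hPR : ∀ p ∈ P, #(G.neighborFinset p ∩ R) ≤ 1 := by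
    intro p hp
    have hxp : x ∈ G.neighborFinset p ∩ O := by
      simp only [P, mem_inter, mem_neighborFinset] at hp ⊢
      exact ⟨hp.1.symm, hx⟩
    calc #(G.neighborFinset p ∩ R) ≤ #((G.neighborFinset p ∩ O).erase x) := by
          refine card_le_card fun w hw => ?_
          simp only [R, mem_inter, mem_sdiff, mem_erase] at hw ⊢
          refine ⟨?_, hw.1, hw.2.1⟩
          rintro rfl
          exact hw.2.2 (self_mem_closedNeighborFinset _)
      _ = 1 := by rw [card_erase_of_mem hxp, hO2 p (mem_inter.1 hp).2]
  obtain ⟨r, hr, hrP⟩ : ∃ r ∈ R, #(G.neighborFinset r ∩ P) < 1 := by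
    refine exists_lt_of_sum_lt ?_
    calc ∑ r ∈ R, #(G.neighborFinset r ∩ P) = ∑ p ∈ P, #(G.neighborFinset p ∩ R) :=
          sum_card_neighborFinset_inter_comm R P
      _ ≤ ∑ p ∈ P, 1 := sum_le_sum hPR
      _ < ∑ r ∈ R, 1 := by simp [hR, hO2 x hx, P]
  rw [Nat.lt_one_iff, card_eq_zero, ← disjoint_iff_inter_eq_empty] at hrP
  have hrR : G.closedNeighborFinset r ∩ O = R := by
    refine eq_of_subset_of_card_le (fun w hw => ?_) ?_
    · have hrx : r ∉ G.closedNeighborFinset x := (mem_sdiff.1 hr).2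
      simp only [R, mem_inter, mem_sdiff, mem_closedNeighborFinset, not_or] at hw hrx ⊢
      obtain ⟨rfl | hrw, hwO⟩ := hw
      · exact ⟨hwO, hrx⟩
      refine ⟨hwO, ?_, fun hxw => disjoint_left.1 hrP ((mem_neighborFinset ..).2 hrw)
        (mem_inter.2 ⟨(mem_neighborFinset ..).2 hxw, hwO⟩)⟩
      rintro rfl
      exact hrx.2 hrw.symm
    · rw [card_closedNeighborFinset_inter_of_mem (mem_sdiff.1 hr).1, hR, hO2 r (mem_sdiff.1 hr).1]
  refine ⟨x, r, fun w hw => ?_⟩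
  by_cases hwx : w ∈ G.closedNeighborFinset x
  · exact mem_union_left _ hwx
  · have hwR : w ∈ R := mem_sdiff.2 ⟨hw, hwx⟩
    rw [← hrR] at hwR
    exact mem_union_right _ (mem_inter.1 hwR).1

lemma card_neighborFinset_inter_neighborFinset_eq_one (hreg : G.IsRegularOfDegree 3)
    (hcard : Fintype.card V = 10)
    (hdiam : ∀ a b, ¬ Disjoint (G.closedNeighborFinset a) (G.closedNeighborFinset b)) (u : V) :
    ∀ o ∈ (G.closedNeighborFinset u)ᶜ, #(G.neighborFinset o ∩ G.neighborFinset u) = 1 := by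
  set A := G.neighborFinset u
  set O := (G.closedNeighborFinset u)ᶜ
  have hAO : ∀ a ∈ A, #(G.neighborFinset a ∩ O) ≤ 2 := by
    intro a ha
    have hu : u ∈ G.neighborFinset a := by simpa [A, G.adj_comm] using ha
    calc #(G.neighborFinset a ∩ O) ≤ #((G.neighborFinset a).erase u) := by
          refine card_le_card fun w hw => ?_
          simp only [O, mem_inter, mem_compl, mem_erase, mem_closedNeighborFinset, not_or] at hw ⊢
          exact ⟨hw.2.1, hw.1⟩
      _ = 2 := by rw [card_erase_of_mem hu, card_neighborFinset_eq_degree, hreg a]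
  -- `o` and `u` have a common closed neighbour, which can only be a neighbour of `u`
  have hOA : ∀ o ∈ O, 1 ≤ #(G.neighborFinset o ∩ A) := by
    intro o ho
    obtain ⟨w, hwo, hwu⟩ := not_disjoint_iff.1 (hdiam o u)
    simp only [O, mem_compl, mem_closedNeighborFinset, not_or] at ho hwo hwu
    refine card_pos.2 ⟨w, ?_⟩
    rcases hwo with rfl | how <;> rcases hwu with rfl | huw
    exacts [absurd rfl ho.1, absurd huw ho.2, absurd how.symm ho.2,
      by simp [A, how, huw]]
  have hsum : ∑ o ∈ O, #(G.neighborFinset o ∩ A) ≤ ∑ o ∈ O, 1 :=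
    calc ∑ o ∈ O, #(G.neighborFinset o ∩ A) = ∑ a ∈ A, #(G.neighborFinset a ∩ O) :=
          sum_card_neighborFinset_inter_comm O A
      _ ≤ ∑ a ∈ A, 2 := sum_le_sum hAO
      _ = ∑ o ∈ O, 1 := by
          simp [A, O, card_neighborFinset_eq_degree, hreg u, card_compl,
            hreg.card_closedNeighborFinset, hcard]
  intro o ho
  exact ((sum_eq_sum_iff_of_le hOA).1 (le_antisymm (sum_le_sum hOA) hsum) o ho).symm

lemma card_neighborFinset_inter_compl_eq_two (hreg : G.IsRegularOfDegree 3)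
    (hcard : Fintype.card V = 10)
    (hdiam : ∀ a b, ¬ Disjoint (G.closedNeighborFinset a) (G.closedNeighborFinset b)) (u : V) :
    ∀ o ∈ (G.closedNeighborFinset u)ᶜ,
      #(G.neighborFinset o ∩ (G.closedNeighborFinset u)ᶜ) = 2 := by
  intro o ho
  have huo : u ∉ G.neighborFinset o := fun h =>
    mem_compl.1 ho (mem_closedNeighborFinset.2 (Or.inr ((mem_neighborFinset ..).1 h).symm))
  have := card_eq_card_inter_add_card_inter (s := G.neighborFinset o)
    (union_compl (G.closedNeighborFinset u) ▸ subset_univ _) disjoint_compl_right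
  rw [closedNeighborFinset, inter_insert_of_notMem huo, ← closedNeighborFinset,
    card_neighborFinset_inter_neighborFinset_eq_one hreg hcard hdiam u o ho,
    card_neighborFinset_eq_degree, hreg o] at this
  omega

lemma exists_isDomSet_card_le_three_of_forall_not_disjoint (hreg : G.IsRegularOfDegree 3)
    (hcard : Fintype.card V = 10)
    (hdiam : ∀ a b, ¬ Disjoint (G.closedNeighborFinset a) (G.closedNeighborFinset b)) :
    ∃ S, IsDomSet G S ∧ #S ≤ 3 := by
  obtain ⟨u⟩ : Nonempty V := Fintype.card_pos_iff.1 (by omega)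
  obtain ⟨x, r, hxr⟩ := exists_subset_union_closedNeighborFinset_of_card_inter_eq_two
    (by rw [card_compl, hreg.card_closedNeighborFinset, hcard])
    (card_neighborFinset_inter_compl_eq_two hreg hcard hdiam u)
  refine ⟨{u, x, r}, isDomSet_triple fun w => ?_, card_le_three⟩
  by_cases hw : w ∈ G.closedNeighborFinset u
  · exact Or.inl hw
  · exact Or.inr (mem_union.1 (hxr (mem_compl.2 hw)))

lemma neighborFinset_subset_union_of_compl_eq_pair {u v x y : V}
    (hR : (G.closedNeighborFinset u ∪ G.closedNeighborFinset v)ᶜ = {x, y})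
    (hxy : Disjoint (G.closedNeighborFinset x) (G.closedNeighborFinset y)) :
    G.neighborFinset x ⊆ G.neighborFinset u ∪ G.neighborFinset v := by
  have hx : x ∉ G.closedNeighborFinset u ∪ G.closedNeighborFinset v := by
    rw [← mem_compl, hR]
    exact mem_insert_self x {y}
  intro w hxw
  rw [mem_neighborFinset] at hxw
  by_cases hw : w ∈ G.closedNeighborFinset u ∪ G.closedNeighborFinset v
  · simp only [mem_union, mem_closedNeighborFinset, mem_neighborFinset] at hw hx ⊢
    rcases hw with (rfl | h) | (rfl | h)
    exacts [absurd (Or.inl (Or.inr hxw.symm)) hx, Or.inl h, absurd (Or.inr (Or.inr hxw.symm)) hx,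
      Or.inr h]
  · rw [← mem_compl, hR, mem_insert, mem_singleton] at hw
    rcases hw with rfl | rfl
    · exact absurd hxw (G.loopless.irrefl _)
    · exact absurd (mem_closedNeighborFinset.2 (Or.inr hxw.symm))
        (disjoint_left.1 hxy (self_mem_closedNeighborFinset x))

lemma neighborFinset_union_eq_of_compl_eq_pair (hreg : G.IsRegularOfDegree 3) {u v x y : V}
    (huv : Disjoint (G.closedNeighborFinset u) (G.closedNeighborFinset v))
    (hR : (G.closedNeighborFinset u ∪ G.closedNeighborFinset v)ᶜ = {x, y})
    (hxy : Disjoint (G.closedNeighborFinset x) (G.closedNeighborFinset y)) :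
    G.neighborFinset x ∪ G.neighborFinset y = G.neighborFinset u ∪ G.neighborFinset v := by
  refine eq_of_subset_of_card_le (union_subset
    (neighborFinset_subset_union_of_compl_eq_pair hR hxy)
    (neighborFinset_subset_union_of_compl_eq_pair (pair_comm x y ▸ hR) hxy.symm)) ?_
  simp only [card_union_of_disjoint (disjoint_neighborFinset_of_disjoint_closedNeighborFinset huv),
    card_union_of_disjoint (disjoint_neighborFinset_of_disjoint_closedNeighborFinset hxy),
    card_neighborFinset_eq_degree, hreg _]
  rfl

lemma card_neighborFinset_inter_pair_eq_one {u v m : V}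
    (huv : Disjoint (G.closedNeighborFinset u) (G.closedNeighborFinset v))
    (hm : m ∈ G.neighborFinset u ∪ G.neighborFinset v) :
    #(G.neighborFinset m ∩ {u, v}) = 1 := by
  wlog hmu : m ∈ G.neighborFinset u generalizing u v
  · rw [pair_comm]
    exact this huv.symm (by rwa [union_comm]) ((mem_union.1 hm).resolve_left hmu)
  have hmv : ¬ G.Adj v m := fun hvm => disjoint_left.1 huv
    (neighborFinset_subset_closedNeighborFinset u hmu) (by simp [hvm])
  rw [card_eq_one]
  refine ⟨u, ext fun w => ?_⟩
  rw [mem_neighborFinset] at hmu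
  simp only [mem_inter, mem_neighborFinset, mem_insert, mem_singleton]
  constructor
  · rintro ⟨hmw, rfl | rfl⟩
    exacts [rfl, absurd hmw.symm hmv]
  · rintro rfl
    exact ⟨hmu.symm, Or.inl rfl⟩

lemma card_neighborFinset_inter_union_eq_one (hreg : G.IsRegularOfDegree 3) {u v x y m : V}
    (huv : Disjoint (G.closedNeighborFinset u) (G.closedNeighborFinset v))
    (hR : (G.closedNeighborFinset u ∪ G.closedNeighborFinset v)ᶜ = {x, y})
    (hxy : Disjoint (G.closedNeighborFinset x) (G.closedNeighborFinset y))
    (hm : m ∈ G.neighborFinset u ∪ G.neighborFinset v) :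
    #(G.neighborFinset m ∩ (G.neighborFinset u ∪ G.neighborFinset v)) = 1 := by
  set M := G.neighborFinset u ∪ G.neighborFinset v
  have hadj : ¬ G.Adj u v := fun h =>
    disjoint_left.1 huv (self_mem_closedNeighborFinset u) (by simp [h.symm])
  have h3 := card_eq_card_inter_add_card_inter (s := G.neighborFinset m)
    (by rw [← hR, union_compl]; exact subset_univ _) (hR ▸ disjoint_compl_right)
  have hN : G.closedNeighborFinset u ∪ G.closedNeighborFinset v = {u, v} ∪ M := by
    ext w; simp only [M, closedNeighborFinset, mem_union, mem_insert, mem_singleton]; tauto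
  have hM : Disjoint ({u, v} : Finset V) M := by
    simp [M, disjoint_insert_left, hadj, G.adj_comm v u]
  rw [card_neighborFinset_eq_degree, hreg m, hN, inter_union_distrib_left,
    card_union_of_disjoint (hM.mono inter_subset_right inter_subset_right),
    card_neighborFinset_inter_pair_eq_one huv hm, card_neighborFinset_inter_pair_eq_one hxy
      (neighborFinset_union_eq_of_compl_eq_pair hreg huv hR hxy ▸ hm)] at h3
  omega

lemma exists_subset_union_closedNeighborFinset_of_card_inter_eq_one {M : Finset V} (hM : #M = 6)
    (hM1 : ∀ m ∈ M, #(G.neighborFinset m ∩ M) = 1) {s t : V} (hs : s ∈ M) (ht : t ∈ M)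
    (hst : s ∉ G.closedNeighborFinset t) :
    ∃ r, M ⊆ G.closedNeighborFinset s ∪ G.closedNeighborFinset t ∪
      G.closedNeighborFinset r := by
  have hcard : ∀ m ∈ M, #(G.closedNeighborFinset m ∩ M) = 2 := by
    intro m hm
    rw [card_closedNeighborFinset_inter_of_mem hm, hM1 m hm]
  have hdisj : ∀ a ∈ M, ∀ b ∈ M, a ∉ G.closedNeighborFinset b →
      Disjoint (G.closedNeighborFinset a ∩ M) (G.closedNeighborFinset b ∩ M) := by
    intro a ha b hb hab
    refine disjoint_left.2 fun w hwa hwb => ?_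
    simp only [mem_inter, mem_closedNeighborFinset] at hwa hwb
    rcases hwa with ⟨rfl | haw, hw⟩ <;> rcases hwb with ⟨rfl | hbw, -⟩
    · exact hab (self_mem_closedNeighborFinset _)
    · exact hab (mem_closedNeighborFinset.2 (Or.inr hbw))
    · exact hab (mem_closedNeighborFinset.2 (Or.inr haw.symm))
    · have hne : a ≠ b := fun h => hab (h ▸ self_mem_closedNeighborFinset a)
      have : #({a, b} : Finset V) ≤ #(G.neighborFinset w ∩ M) :=
        card_le_card (by simp [insert_subset_iff, haw.symm, hbw.symm, ha, hb])
      rw [card_pair hne, hM1 w hw] at this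
      omega
  have hst' := hdisj s hs t ht hst
  obtain ⟨r, hrM, hr⟩ := exists_mem_notMem_of_card_lt_card
    (s := G.closedNeighborFinset s ∩ M ∪ G.closedNeighborFinset t ∩ M) (t := M)
    (by rw [card_union_of_disjoint hst', hcard s hs, hcard t ht, hM]; omega)
  simp only [mem_union, mem_inter, hrM, and_true, not_or] at hr
  have hsr := hdisj s hs r hrM (mem_closedNeighborFinset_comm.not.1 hr.1)
  have htr := hdisj t ht r hrM (mem_closedNeighborFinset_comm.not.1 hr.2)
  refine ⟨r, ?_⟩
  have hcover : G.closedNeighborFinset s ∩ M ∪ G.closedNeighborFinset t ∩ M ∪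
      G.closedNeighborFinset r ∩ M = M := eq_of_subset_of_card_le
    (union_subset (union_subset inter_subset_right inter_subset_right) inter_subset_right) (by
    rw [card_union_of_disjoint (disjoint_union_left.2 ⟨hsr, htr⟩), card_union_of_disjoint hst',
      hcard s hs, hcard t ht, hcard r hrM, hM])
  rw [← hcover]
  exact union_subset_union (union_subset_union inter_subset_left inter_subset_left)
    inter_subset_left

lemma exists_mem_inter_notMem_closedNeighborFinset (hreg : G.IsRegularOfDegree 3) {u v x y : V}
    (huv : Disjoint (G.closedNeighborFinset u) (G.closedNeighborFinset v))
    (hR : (G.closedNeighborFinset u ∪ G.closedNeighborFinset v)ᶜ = {x, y})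
    (hxy : Disjoint (G.closedNeighborFinset x) (G.closedNeighborFinset y))
    (h2 : 2 ≤ #(G.neighborFinset u ∩ G.neighborFinset x)) :
    ∃ s ∈ G.neighborFinset u ∩ G.neighborFinset x,
      ∃ t ∈ G.neighborFinset v ∩ G.neighborFinset y, s ∉ G.closedNeighborFinset t := by
  have hM := neighborFinset_union_eq_of_compl_eq_pair hreg huv hR hxy
  -- splitting `N(x)` along `N(u), N(v)` and `N(v)` along `N(x), N(y)` gives
  -- `#(N(v) ∩ N(y)) = #(N(u) ∩ N(x)) ≥ 2`
  have hx := card_eq_card_inter_add_card_inter (s := G.neighborFinset x)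
    (hM ▸ subset_union_left) (disjoint_neighborFinset_of_disjoint_closedNeighborFinset huv)
  have hv := card_eq_card_inter_add_card_inter (s := G.neighborFinset v)
    (hM.symm ▸ subset_union_right) (disjoint_neighborFinset_of_disjoint_closedNeighborFinset hxy)
  simp only [card_neighborFinset_eq_degree, hreg _, inter_comm (G.neighborFinset x)] at hx hv
  obtain ⟨s, hs⟩ : (G.neighborFinset u ∩ G.neighborFinset x).Nonempty := card_pos.1 (by omega)
  have hsM : s ∈ G.neighborFinset u ∪ G.neighborFinset v := mem_union_left _ (mem_inter.1 hs).1
  -- a vertex of `N(v) ∩ N(y)` in `N[s]` is the unique neighbour of `s` in `N(u) ∪ N(v)`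
  have hle : #(G.neighborFinset v ∩ G.neighborFinset y ∩ G.closedNeighborFinset s) ≤ 1 := by
    rw [← card_neighborFinset_inter_union_eq_one hreg huv hR hxy hsM]
    refine card_le_card fun w hw => ?_
    simp only [mem_inter, mem_closedNeighborFinset] at hw
    obtain ⟨⟨hwv, -⟩, rfl | hsw⟩ := hw
    · exact absurd hwv (disjoint_left.1
        (disjoint_neighborFinset_of_disjoint_closedNeighborFinset huv) (mem_inter.1 hs).1)
    · exact mem_inter.2 ⟨(mem_neighborFinset ..).2 hsw, mem_union_right _ hwv⟩
  obtain ⟨t, ht⟩ :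
      ((G.neighborFinset v ∩ G.neighborFinset y) \ G.closedNeighborFinset s).Nonempty := by
    have := card_sdiff_add_card_inter (G.neighborFinset v ∩ G.neighborFinset y)
      (G.closedNeighborFinset s)
    exact card_pos.1 (by omega)
  rw [mem_sdiff] at ht
  exact ⟨s, hs, t, ht.1, mem_closedNeighborFinset_comm.not.1 ht.2⟩

lemma exists_isDomSet_card_le_three_of_compl_eq_pair (hreg : G.IsRegularOfDegree 3) {u v x y : V}
    (huv : Disjoint (G.closedNeighborFinset u) (G.closedNeighborFinset v))
    (hR : (G.closedNeighborFinset u ∪ G.closedNeighborFinset v)ᶜ = {x, y})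
    (hxy : Disjoint (G.closedNeighborFinset x) (G.closedNeighborFinset y)) :
    ∃ S, IsDomSet G S ∧ #S ≤ 3 := by
  wlog h2 : 2 ≤ #(G.neighborFinset u ∩ G.neighborFinset x) generalizing x y
  · refine this (pair_comm x y ▸ hR) hxy.symm ?_
    have := card_eq_card_inter_add_card_inter (s := G.neighborFinset u)
      ((neighborFinset_union_eq_of_compl_eq_pair hreg huv hR hxy).symm ▸ subset_union_left)
      (disjoint_neighborFinset_of_disjoint_closedNeighborFinset hxy)
    rw [card_neighborFinset_eq_degree, hreg u] at this
    omega
  set M := G.neighborFinset u ∪ G.neighborFinset v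
  obtain ⟨s, hs, t, ht, hst⟩ := exists_mem_inter_notMem_closedNeighborFinset hreg huv hR hxy h2
  rw [mem_inter, mem_neighborFinset, mem_neighborFinset] at hs ht
  obtain ⟨r, hr⟩ := exists_subset_union_closedNeighborFinset_of_card_inter_eq_one (M := M)
    (by rw [card_union_of_disjoint (disjoint_neighborFinset_of_disjoint_closedNeighborFinset huv),
      card_neighborFinset_eq_degree, card_neighborFinset_eq_degree, hreg u, hreg v])
    (fun m hm => card_neighborFinset_inter_union_eq_one hreg huv hR hxy hm)
    (mem_union_left _ ((mem_neighborFinset ..).2 hs.1))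
    (mem_union_right _ ((mem_neighborFinset ..).2 ht.1)) hst
  refine ⟨{s, t, r}, isDomSet_triple fun w => ?_, card_le_three⟩
  by_cases hwM : w ∈ M
  · simpa [or_assoc] using hr hwM
  have hw : w = u ∨ w = v ∨ w = x ∨ w = y := by
    by_cases hw : w ∈ G.closedNeighborFinset u ∪ G.closedNeighborFinset v
    · simp only [M, mem_union, mem_closedNeighborFinset, mem_neighborFinset] at hw hwM
      tauto
    · rw [← mem_compl, hR, mem_insert, mem_singleton] at hw
      tauto
  simp only [mem_closedNeighborFinset]
  rcases hw with rfl | rfl | rfl | rfl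
  · exact Or.inl (Or.inr hs.1.symm)
  · exact Or.inr (Or.inl (Or.inr ht.1.symm))
  · exact Or.inl (Or.inr hs.2.symm)
  · exact Or.inr (Or.inl (Or.inr ht.2.symm))

lemma exists_isDomSet_card_le_three_of_disjoint (hreg : G.IsRegularOfDegree 3)
    (hcard : Fintype.card V = 10) {u v : V}
    (huv : Disjoint (G.closedNeighborFinset u) (G.closedNeighborFinset v)) :
    ∃ S, IsDomSet G S ∧ #S ≤ 3 := by
  obtain ⟨x, y, -, hR⟩ : ∃ x y, x ≠ y ∧
      (G.closedNeighborFinset u ∪ G.closedNeighborFinset v)ᶜ = {x, y} := card_eq_two.1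
    (by rw [card_compl, card_union_of_disjoint huv, hreg.card_closedNeighborFinset,
      hreg.card_closedNeighborFinset, hcard])
  by_cases hxy : Disjoint (G.closedNeighborFinset x) (G.closedNeighborFinset y)
  · exact exists_isDomSet_card_le_three_of_compl_eq_pair hreg huv hR hxy
  obtain ⟨z, hxz, hyz⟩ := not_disjoint_iff.1 hxy
  refine ⟨{u, v, z}, isDomSet_triple fun w => ?_, card_le_three⟩
  by_cases hw : w ∈ G.closedNeighborFinset u ∪ G.closedNeighborFinset v
  · rcases mem_union.1 hw with hw | hw
    exacts [Or.inl hw, Or.inr (Or.inl hw)]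
  · rw [← mem_compl, hR, mem_insert, mem_singleton] at hw
    rcases hw with rfl | rfl
    exacts [Or.inr (Or.inr (mem_closedNeighborFinset_comm.1 hxz)),
      Or.inr (Or.inr (mem_closedNeighborFinset_comm.1 hyz))]

lemma exists_isDomSet_card_le_three (hreg : G.IsRegularOfDegree 3)
    (hcard : Fintype.card V = 10) : ∃ S, IsDomSet G S ∧ #S ≤ 3 := by
  by_cases h : ∃ u v, Disjoint (G.closedNeighborFinset u) (G.closedNeighborFinset v)
  · obtain ⟨u, v, huv⟩ := h
    exact exists_isDomSet_card_le_three_of_disjoint hreg hcard huv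
  · push Not at h
    exact exists_isDomSet_card_le_three_of_forall_not_disjoint hreg hcard h

end CubicOrderTen

theorem domNumber_cubic_order_ten_general {V : Type*} [Fintype V] (G : SimpleGraph V) [DecidableRel G.Adj]
    (hreg : G.IsRegularOfDegree 3)
    (hcard : Fintype.card V = 10) :
    domNumber G = 3 := by
  classical
  refine domNumber_eq_of_exists_of_forall (exists_isDomSet_card_le_three hreg hcard) fun S hS => ?_
  have := hS.card_le_mul hreg
  omega

theorem domNumber_cubic_order_ten {V : Type*} [Fintype V] (G : SimpleGraph V) [DecidableRel G.Adj]
    (hconn : G.Connected) (hreg : G.IsRegularOfDegree 3)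
    (hcard : Fintype.card V = 10) :
    domNumber G = 3 :=
  domNumber_cubic_order_ten_general G hreg hcard
end
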